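/- Every continuous real-valued function on a Suslin tree (with the order topology) has countable image. -/

import Mathlib

open Set Topology Cardinal Ordinal

universe u v

/-- The order (interval) topology of a tree. -/
def treeTopology (T : Type u) [PartialOrder T] : TopologicalSpace T :=
  TopologicalSpace.generateFrom
    ({s | ∃ a b : T, a < b ∧ s = Set.Ioc a b} ∪
     {s | ∃ b : T, (∀ a : T, ¬a < b) ∧ s = {b}})

/-- A tree order: the predecessors of every element are well-ordered. -/
def IsTreeOrder (T : Type u) [PartialOrder T] : Prop :=
  ∀ x : T, IsWellOrder {y : T // y < x} (· < ·)

/-- The height of an element: the order type of its set of predecessors. -/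
noncomputable def treeHeight {T : Type u} [PartialOrder T] (hT : IsTreeOrder T) (x : T) :
    Ordinal.{u} :=
  @Ordinal.type {y : T // y < x} (· < ·) (hT x)

/-- Hausdorff tree: elements at limit levels are determined by their predecessors. -/
def IsHausdorffTree (T : Type u) [PartialOrder T] : Prop :=
  ∀ x y : T, Set.Iio x = Set.Iio y → (Set.Iio x).Nonempty →
    (∀ z ∈ Set.Iio x, ∃ w ∈ Set.Iio x, z < w) → x = y

/-- The tree has height ω₁. -/
def HasHeightOmega1 {T : Type u} [PartialOrder T] (hT : IsTreeOrder T) : Prop :=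
  (∀ x : T, treeHeight hT x < ω₁) ∧ ∀ α < ω₁, ∃ x : T, treeHeight hT x = α

/-- Downward closure of a subset of a tree. -/
def downClosure {T : Type u} [PartialOrder T] (S : Set T) : Set T := {x | ∃ y ∈ S, x ≤ y}

/-- `D` is a closed discrete subset of the subspace `S`. -/
def ClosedDiscreteIn {T : Type u} [TopologicalSpace T] (D S : Set T) : Prop :=
  D ⊆ S ∧ closure D ∩ S ⊆ D ∧ ∀ x ∈ D, ∃ U : Set T, IsOpen U ∧ x ∈ U ∧ U ∩ D = {x}

/-- `S` is ω₁-compact in the subspace topology: every closed discrete subset is countable. -/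
def OmegaOneCompactIn {T : Type u} [TopologicalSpace T] (S : Set T) : Prop :=
  ∀ D : Set T, ClosedDiscreteIn D S → D.Countable

/-- A club (closed unbounded) subset of `ω₁` (as a set of ordinals, with the order topology). -/
def IsClubBelowOmega1 (C : Set Ordinal.{u}) : Prop :=
  C ⊆ Set.Iio ω₁ ∧ (∀ α < ω₁, ∃ β ∈ C, α ≤ β) ∧ ∀ α < ω₁, α ∈ closure C → α ∈ C

/-- A stationary subset of `ω₁`. -/
def IsStationaryBelowOmega1 (S : Set Ordinal.{u}) : Prop :=
  S ⊆ Set.Iio ω₁ ∧ ∀ C : Set Ordinal.{u}, IsClubBelowOmega1 C → (S ∩ C).Nonempty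

/-!
Call a node `x` constant if `f` is constant on the cone `Ici x`. Every value taken at a constant
node is taken at a minimal constant node, and these form an antichain. A non-constant node lies,
for some rationals `q₁ < q₂`, in the downward closed set of nodes whose cone meets both
`{f < q₁}` and `{f > q₂}`, two sets with disjoint closures.

Given countably many sets `P i`, close off along an `ω`-sequence of levels to get `δ < ω₁` such
that, cofinally below `δ`, the minimal elements of `P i` above level `β` (a countable antichain)
all have height `< δ`. If the cone of a node `z` of height `δ` meets `P i`, the minimal element
below it lies strictly below `z` and above any prescribed `c < z`; since the intervals `Ioc c z`
form a neighbourhood base at `z`, this puts `z` in the closure of `P i`. So a downward closed set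
of nodes whose cones meet two sets with disjoint closures has no node of height `δ`, hence lies
below level `δ` and is countable.
-/

theorem Ordinal.countable_Iio_of_lt_omega_one {δ : Ordinal.{u}} (h : δ < ω₁) :
    (Iio δ).Countable := by
  rw [← le_aleph0_iff_set_countable, Cardinal.mk_Iio_ordinal, Cardinal.lift_le_aleph0,
    ← lt_aleph_one_iff]
  exact lt_omega_iff_card_lt.1 h

theorem Ordinal.exists_pos_lt_omega_one_forall_exists_mem_Ioo (F : Ordinal.{u} → Ordinal.{u})
    (hF : ∀ β < ω₁, F β < ω₁) : ∃ δ < ω₁, 0 < δ ∧ ∀ α < δ, ∃ β ∈ Ioo α δ, F β < δ := by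
  let g : ℕ → Ordinal.{u} := fun n => Nat.rec 0 (fun _ o => max (F o) o + 1) n
  have hg_succ (n : ℕ) : max (F (g n)) (g n) < g (n + 1) := Order.lt_add_one_iff.2 le_rfl
  have hg (n : ℕ) : g n < ω₁ := by
    induction n with
    | zero => exact omega_pos 1
    | succ n ih => exact (isSuccLimit_omega 1).add_one_lt (max_lt (hF _ ih) ih)
  have hF_lt (n : ℕ) : F (g n) < ⨆ n, g n :=
    ((le_max_left _ _).trans_lt (hg_succ n)).trans_le (Ordinal.le_iSup g (n + 1))
  have hg_lt (n : ℕ) : g n < ⨆ n, g n :=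
    ((le_max_right _ _).trans_lt (hg_succ n)).trans_le (Ordinal.le_iSup g (n + 1))
  refine ⟨⨆ n, g n, Ordinal.iSup_lt_omega_one hg, hg_lt 0, fun α hα => ?_⟩
  obtain ⟨n, hn⟩ := Ordinal.lt_iSup_iff.1 hα
  exact ⟨g n, ⟨hn, hg_lt n⟩, hF_lt n⟩

namespace IsTreeOrder

variable {T : Type u} [PartialOrder T] (hT : IsTreeOrder T)
include hT

theorem le_total_of_le_of_le {a b x : T} (ha : a ≤ x) (hb : b ≤ x) : a ≤ b ∨ b ≤ a := by
  rcases ha.eq_or_lt with rfl | ha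
  · exact Or.inr hb
  rcases hb.eq_or_lt with rfl | hb
  · exact Or.inl ha.le
  have := hT x
  rcases trichotomous_of ((· < ·) : {y // y < x} → {y // y < x} → Prop) ⟨a, ha⟩ ⟨b, hb⟩ with
    h | h | h
  · exact Or.inl h.le
  · exact Or.inl (congrArg Subtype.val h).le
  · exact Or.inr h.le

theorem wellFoundedLT : WellFoundedLT T := by
  refine ⟨⟨fun x => ⟨x, fun y hyx => ?_⟩⟩⟩
  have := hT x
  exact IsWellFounded.induction (· < ·) (motive := fun y : {y // y < x} => Acc (· < ·) y.1) ⟨y, hyx⟩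
    fun y ih => ⟨y.1, fun w hwy => ih ⟨w, hwy.trans y.2⟩ hwy⟩

theorem treeHeight_eq_typein {x y : T} (h : y < x) :
    treeHeight hT y = @Ordinal.typein {z // z < x} (· < ·) (hT x) ⟨y, h⟩ := by
  have := hT x; have := hT y
  rw [treeHeight, ← Ordinal.type_subrel]
  exact RelIso.ordinalType_congr ⟨⟨fun z => ⟨⟨z.1, z.2.trans h⟩, z.2⟩, fun z => ⟨z.1.1, z.2⟩,
    fun _ => rfl, fun _ => rfl⟩, Iff.rfl⟩

theorem treeHeight_strictMono : StrictMono (treeHeight hT) := fun y x h => by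
  have := hT x
  rw [hT.treeHeight_eq_typein h]
  exact Ordinal.typein_lt_type _ _

theorem exists_le_treeHeight_eq {x : T} {δ : Ordinal.{u}} (h : δ ≤ treeHeight hT x) :
    ∃ y ≤ x, treeHeight hT y = δ := by
  rcases h.eq_or_lt with rfl | h
  · exact ⟨x, le_rfl, rfl⟩
  have := hT x
  obtain ⟨⟨y, hy⟩, rfl⟩ := Ordinal.typein_surj ((· < ·) : {y // y < x} → {y // y < x} → Prop) h
  exact ⟨y, hy.le, hT.treeHeight_eq_typein hy⟩

theorem exists_lt_of_treeHeight_pos {x : T} (h : 0 < treeHeight hT x) : ∃ y, y < x := by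
  obtain ⟨y, hyx, hy⟩ := hT.exists_le_treeHeight_eq h.le
  exact ⟨y, hyx.lt_of_ne (by rintro rfl; exact h.ne' hy)⟩

theorem lt_of_treeHeight_lt {a z : T} (hc : a ≤ z ∨ z ≤ a)
    (h : treeHeight hT a < treeHeight hT z) : a < z :=
  hc.elim (fun hle => hle.lt_of_ne (by rintro rfl; exact h.false))
    (fun hle => absurd (hT.treeHeight_strictMono.monotone hle) h.not_ge)

theorem isAntichain_setOf_treeHeight_eq (β : Ordinal.{u}) :
    IsAntichain (· ≤ ·) {x : T | treeHeight hT x = β} :=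
  fun _ hx _ hy hne hle => (hT.treeHeight_strictMono (hle.lt_of_ne hne)).ne (hx.trans hy.symm)

theorem exists_Ioc_subset_of_isOpen {U : Set T} (hU : IsOpen[treeTopology T] U) {z : T}
    (hz : z ∈ U) (hmin : ∃ w, w < z) : ∃ c < z, Ioc c z ⊆ U := by
  induction hU with
  | basic s hs =>
    rcases hs with ⟨a, b, -, rfl⟩ | ⟨b, hb, rfl⟩
    · exact ⟨a, hz.1, fun y hy => ⟨hy.1, hy.2.trans hz.2⟩⟩
    · obtain ⟨w, hw⟩ := hmin
      exact absurd (hz ▸ hw) (hb w)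
  | univ => obtain ⟨w, hw⟩ := hmin; exact ⟨w, hw, subset_univ _⟩
  | inter s t _ _ ihs iht =>
    obtain ⟨c₁, hc₁, hs⟩ := ihs hz.1
    obtain ⟨c₂, hc₂, ht⟩ := iht hz.2
    rcases hT.le_total_of_le_of_le hc₁.le hc₂.le with h | h
    · exact ⟨c₂, hc₂, fun y hy => ⟨hs ⟨h.trans_lt hy.1, hy.2⟩, ht hy⟩⟩
    · exact ⟨c₁, hc₁, fun y hy => ⟨hs hy, ht ⟨h.trans_lt hy.1, hy.2⟩⟩⟩
  | sUnion S _ ih =>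
    obtain ⟨s, hsS, hzs⟩ := hz
    obtain ⟨c, hc, hsub⟩ := ih s hsS hzs
    exact ⟨c, hc, fun y hy => ⟨s, hsS, hsub hy⟩⟩

theorem mem_closure_of_forall_exists_mem_Ioc {P : Set T} {z : T} (hmin : ∃ w, w < z)
    (h : ∀ c < z, (Ioc c z ∩ P).Nonempty) : z ∈ closure[treeTopology T] P := by
  rw [@mem_closure_iff _ (treeTopology T)]
  intro U hU hzU
  obtain ⟨c, hc, hcU⟩ := hT.exists_Ioc_subset_of_isOpen hU hzU hmin
  obtain ⟨a, ha, haP⟩ := h c hc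
  exact ⟨a, hcU ha, haP⟩

section Suslin

variable (hht : ∀ x, treeHeight hT x < ω₁)
  (hanti : ∀ A : Set T, IsAntichain (· ≤ ·) A → A.Countable)
include hanti

theorem countable_setOf_treeHeight_lt {δ : Ordinal.{u}} (hδ : δ < ω₁) :
    {x | treeHeight hT x < δ}.Countable := by
  have hlevel (β : Ordinal.{u}) := hanti _ (hT.isAntichain_setOf_treeHeight_eq β)
  refine ((Ordinal.countable_Iio_of_lt_omega_one hδ).biUnion fun β _ => hlevel β).mono
    fun x hx => ?_
  exact mem_biUnion (show treeHeight hT x < δ from hx) rfl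

theorem countable_of_isLowerSet {S : Set T} (hS : IsLowerSet S)
    {δ : Ordinal.{u}} (hδ : δ < ω₁) (h : ∀ z ∈ S, treeHeight hT z ≠ δ) : S.Countable := by
  refine (hT.countable_setOf_treeHeight_lt hanti hδ).mono fun x hx =>
    show treeHeight hT x < δ from lt_of_not_ge fun hδx => ?_
  obtain ⟨y, hyx, hy⟩ := hT.exists_le_treeHeight_eq hδx
  exact h y (hS hyx hx) hy

include hht

theorem exists_forall_treeHeight_eq_mem_closure {ι : Type*} [Countable ι] (P : ι → Set T) :
    ∃ δ < ω₁, ∀ z, treeHeight hT z = δ → ∀ i, (Ici z ∩ P i).Nonempty →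
      z ∈ closure[treeTopology T] (P i) := by
  have := hT.wellFoundedLT
  let E (i : ι) (β : Ordinal.{u}) : Set T := {t | β < treeHeight hT t ∧ t ∈ P i}
  let A (β : Ordinal.{u}) : Set T := ⋃ i, {a | Minimal (· ∈ E i β) a}
  let F (β : Ordinal.{u}) : Ordinal.{u} := ⨆ a : A β, treeHeight hT a
  have hF (β : Ordinal.{u}) : F β < ω₁ :=
    have := (countable_iUnion fun i => hanti _ (setOfPred_minimal_antichain (· ∈ E i β))).to_subtype
    Ordinal.iSup_lt_omega_one fun a => hht a
  obtain ⟨δ, hδ, hδ_pos, hδ_cof⟩ :=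
    Ordinal.exists_pos_lt_omega_one_forall_exists_mem_Ioo F fun β _ => hF β
  refine ⟨δ, hδ, fun z hz i ⟨u, hzu, hu⟩ => ?_⟩
  refine hT.mem_closure_of_forall_exists_mem_Ioc (hT.exists_lt_of_treeHeight_pos (hz ▸ hδ_pos))
    fun c hc => ?_
  obtain ⟨β, ⟨hcβ, hβδ⟩, hFβ⟩ := hδ_cof _ (hz ▸ hT.treeHeight_strictMono hc)
  have huE : u ∈ E i β := ⟨hβδ.trans_le (hz ▸ hT.treeHeight_strictMono.monotone hzu), hu⟩
  obtain ⟨m, hmu, hm⟩ := exists_minimal_le_of_wellFoundedLT _ u huE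
  have hmz : m < z := hT.lt_of_treeHeight_lt (hT.le_total_of_le_of_le hmu hzu)
    (hz ▸ (Ordinal.le_iSup (fun a : A β => treeHeight hT a) ⟨m, mem_iUnion.2 ⟨i, hm⟩⟩).trans_lt hFβ)
  have hcm : c < m :=
    hT.lt_of_treeHeight_lt (hT.le_total_of_le_of_le hc.le hmz.le) (hcβ.trans hm.prop.1)
  exact ⟨m, ⟨hcm, hmz.le⟩, hm.prop.2⟩

theorem countable_setOf_nonempty_inter_of_disjoint_closure {P Q : Set T}
    (hPQ : Disjoint (closure[treeTopology T] P) (closure[treeTopology T] Q)) :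
    {x | (Ici x ∩ P).Nonempty ∧ (Ici x ∩ Q).Nonempty}.Countable := by
  obtain ⟨δ, hδ, hcl⟩ := hT.exists_forall_treeHeight_eq_mem_closure hht hanti ![P, Q]
  refine hT.countable_of_isLowerSet hanti ?_ hδ ?_
  · rintro x y hyx ⟨⟨u, hxu, hu⟩, ⟨v, hxv, hv⟩⟩
    exact ⟨⟨u, hyx.trans hxu, hu⟩, ⟨v, hyx.trans hxv, hv⟩⟩
  · rintro z ⟨hP, hQ⟩ hz
    exact hPQ.ne_of_mem (hcl z hz 0 hP) (hcl z hz 1 hQ) rfl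

end Suslin

end IsTreeOrder

theorem disjoint_closure_preimage_Iio_Ioi {X Y : Type*} [TopologicalSpace X] [TopologicalSpace Y]
    [LinearOrder Y] [OrderClosedTopology Y] {f : X → Y} (hf : Continuous f) {a b : Y}
    (hab : a < b) : Disjoint (closure (f ⁻¹' Iio a)) (closure (f ⁻¹' Ioi b)) :=
  ((Iic_disjoint_Ici.2 hab.not_ge).preimage f).mono
    (closure_minimal (preimage_mono Iio_subset_Iic_self) (isClosed_Iic.preimage hf))
    (closure_minimal (preimage_mono Ioi_subset_Ici_self) (isClosed_Ici.preimage hf))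

theorem exists_rat_nonempty_inter_preimage_Iio_Ioi {X : Type*} (f : X → ℝ) {s : Set X} {v w : X}
    (hv : v ∈ s) (hw : w ∈ s) (hvw : f v < f w) :
    ∃ q : ℚ × ℚ, q.1 < q.2 ∧ (s ∩ f ⁻¹' Iio (q.1 : ℝ)).Nonempty ∧
      (s ∩ f ⁻¹' Ioi (q.2 : ℝ)).Nonempty := by
  obtain ⟨q₂, hvq₂, hq₂w⟩ := exists_rat_btwn hvw
  obtain ⟨q₁, hvq₁, hq₁₂⟩ := exists_rat_btwn hvq₂
  exact ⟨(q₁, q₂), Rat.cast_lt.1 hq₁₂, ⟨v, hv, hvq₁⟩, ⟨w, hw, hq₂w⟩⟩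

theorem countable_image_of_continuous_on_suslin_general {T : Type u} [PartialOrder T]
    [tT : TopologicalSpace T] (htop : tT = treeTopology T)
    (hT : IsTreeOrder T) (hht : HasHeightOmega1 hT)
    (hantichain : ∀ A : Set T, IsAntichain (· ≤ ·) A → A.Countable)
    (f : T → ℝ) (hf : Continuous f) :
    (Set.range f).Countable := by
  have := hT.wellFoundedLT
  let R : Set T := {x | ∀ u, x ≤ u → f u = f x}
  let S : Set T := ⋃ (q : ℚ × ℚ) (_ : q.1 < q.2),
    {x | (Ici x ∩ f ⁻¹' Iio (q.1 : ℝ)).Nonempty ∧ (Ici x ∩ f ⁻¹' Ioi (q.2 : ℝ)).Nonempty}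
  have hS : S.Countable := countable_iUnion fun q => countable_iUnion fun hq =>
    hT.countable_setOf_nonempty_inter_of_disjoint_closure hht.1 hantichain
      (htop ▸ disjoint_closure_preimage_Iio_Ioi hf (Rat.cast_lt.2 hq))
  refine (((hantichain _ (setOfPred_minimal_antichain (· ∈ R))).image f).union (hS.image f)).mono ?_
  rintro _ ⟨x, rfl⟩
  by_cases hx : x ∈ R
  · obtain ⟨m, hmx, hm⟩ := exists_minimal_le_of_wellFoundedLT _ x hx
    exact Or.inl ⟨m, hm, (hm.prop x hmx).symm⟩
  obtain ⟨u, hxu, hne⟩ : ∃ u, x ≤ u ∧ f u ≠ f x := by simpa [R] using hx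
  obtain ⟨q, hq, hS⟩ := hne.lt_or_gt.elim
    (exists_rat_nonempty_inter_preimage_Iio_Ioi f (mem_Ici.2 hxu) self_mem_Ici)
    (exists_rat_nonempty_inter_preimage_Iio_Ioi f self_mem_Ici (mem_Ici.2 hxu))
  exact Or.inr ⟨x, mem_iUnion₂.2 ⟨q, hq, hS⟩, rfl⟩

/-- Every continuous real-valued function on a (Hausdorff) Suslin tree, with
the order topology, has countable image. A Suslin tree is a tree of height ω₁ all of whose
chains and antichains are countable. -/
theorem countable_image_of_continuous_on_suslin {T : Type u} [PartialOrder T]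
    [tT : TopologicalSpace T] (htop : tT = treeTopology T)
    (hT : IsTreeOrder T) (hH : IsHausdorffTree T) (hht : HasHeightOmega1 hT)
    (hchain : ∀ c : Set T, IsChain (· ≤ ·) c → c.Countable)
    (hantichain : ∀ A : Set T, IsAntichain (· ≤ ·) A → A.Countable)
    (f : T → ℝ) (hf : Continuous f) :
    (Set.range f).Countable :=
  countable_image_of_continuous_on_suslin_general (tT := tT) htop hT hht hantichain f hf
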